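/- arXiv:1011.6432 — 4 statements merged into one kernel-verified Lean document; each statement's English description precedes it below -/
import Mathlib

section
/- In a data braid, the marked positions are exactly the positions that start a factor of the ordered partition: for a data braid w with ordered partition w_1 · ... · w_k, a position i carries the datum d_1 if and only if i is the first position of some factor w_j. -/
/-! In every ordered partition the factors start exactly at position `0` and at the descents
`d_{i+1} ≤ d_i` of the data, so all ordered partitions of a word have the same factor starts.
In the partition witnessing the braid property, the minimum `d₁` lies in the first factor, hence
by the sublist condition in every factor, and a strictly increasing factor containing its minimum
starts with it: every factor start carries `d₁`. Conversely, a later occurrence of the minimum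
`d₁` is a descent. -/

variable {A : Type*} {D : Type*} [LinearOrder D]

/-- An ordered partition of a data word: a factorization into nonempty consecutive
factors, strictly increasing in the data component, such that the first datum of each
next factor is ≤ the last datum of the previous factor (maximality). -/
def IsOrderedPartition (P : List (List (A × D))) (w : List (A × D)) : Prop :=
  P.flatten = w ∧
  (∀ b ∈ P, b ≠ []) ∧
  (∀ b ∈ P, (b.map Prod.snd).Chain' (· < ·)) ∧
  P.Chain' (fun b c => ∀ x ∈ (c.map Prod.snd).head?, ∀ y ∈ (b.map Prod.snd).getLast?, x ≤ y)

/-- A data braid w.r.t. a marking of the alphabet: the minimum datum appears at the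
first position, the data projection of each factor of the ordered partition is a
subsequence of that of the next factor, and the marked positions are exactly those
carrying the first datum. -/
def IsDataBraid (marked : A → Prop) (w : List (A × D)) : Prop :=
  ∃ P : List (List (A × D)), IsOrderedPartition P w ∧
    (∀ d₁ ∈ (w.map Prod.snd).head?,
      (∀ p ∈ w, d₁ ≤ p.2) ∧ (∀ p ∈ w, marked p.1 ↔ p.2 = d₁)) ∧
    P.Chain' (fun b c => (b.map Prod.snd).Sublist (c.map Prod.snd))

/-- Position `i` is the first position of some factor of the partition `P`. -/
def startsFactor (P : List (List (A × D))) (i : ℕ) : Prop :=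
  ∃ j < P.length, i = ((P.take j).map List.length).sum

lemma List.head_le_of_isChain_lt {α : Type*} [Preorder α] {l : List α}
    (h : l.IsChain (· < ·)) {x y : α} (hx : x ∈ l) (hy : y ∈ l.head?) : y ≤ x := by
  obtain ⟨a, t, rfl⟩ := List.exists_cons_of_ne_nil (List.ne_nil_of_mem hx)
  obtain rfl : a = y := by simpa using hy
  rcases List.mem_cons.1 hx with rfl | hx
  · exact le_rfl
  · exact ((List.pairwise_cons.1 (List.isChain_iff_pairwise.1 h)).1 x hx).le

lemma List.mem_of_isChain_sublist {α β : Type*} {f : α → List β} {b₀ : α} {L : List α}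
    (h : (b₀ :: L).IsChain fun b c => (f b).Sublist (f c)) {x : β} (hx : x ∈ f b₀) :
    ∀ b ∈ b₀ :: L, x ∈ f b := by
  induction L generalizing b₀ with
  | nil => simpa using hx
  | cons c L ih =>
    rw [List.isChain_cons_cons] at h
    rintro b (_ | ⟨_, hb⟩)
    · exact hx
    · exact ih h.2 (h.1.subset hx) b hb

section Factors

variable {α β : Type*}

lemma startsFactor_zero {P : List (List (α × β))} (hP : P ≠ []) : startsFactor P 0 :=
  ⟨0, List.length_pos_iff.2 hP, rfl⟩

lemma startsFactor_cons {b : List (α × β)} {P : List (List (α × β))} {i : ℕ} :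
    startsFactor (b :: P) i ↔ i = 0 ∨ ∃ k, i = b.length + k ∧ startsFactor P k := by
  constructor
  · rintro ⟨_ | j, hj, rfl⟩
    · exact .inl rfl
    · exact .inr ⟨_, by simp, j, by simpa using hj, rfl⟩
  · rintro (rfl | ⟨k, rfl, j, hj, rfl⟩)
    · exact ⟨0, by simp, rfl⟩
    · exact ⟨j + 1, by simpa using hj, by simp⟩

lemma exists_mem_head?_of_startsFactor {P : List (List (α × β))} {w : List (α × β)}
    (hflat : P.flatten = w) (hne : ∀ b ∈ P, b ≠ []) {i : ℕ} (h : startsFactor P i)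
    (hi : i < w.length) : ∃ b ∈ P, w[i] ∈ b.head? := by
  subst hflat
  induction P generalizing i with
  | nil => simp at hi
  | cons b P ih =>
    rcases startsFactor_cons.1 h with rfl | ⟨k, rfl, hk⟩
    · obtain ⟨a, t, rfl⟩ := List.exists_cons_of_ne_nil (hne b List.mem_cons_self)
      exact ⟨_, List.mem_cons_self, by simp⟩
    · simp only [List.flatten_cons, List.length_append] at hi
      obtain ⟨c, hc, hk⟩ := ih (fun c hc => hne c (List.mem_cons_of_mem _ hc)) hk (by omega)
      exact ⟨c, List.mem_cons_of_mem _ hc, by simpa [List.getElem_append_right] using hk⟩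

end Factors

theorem IsOrderedPartition.startsFactor_succ_iff {P : List (List (A × D))} {w : List (A × D)}
    (hP : IsOrderedPartition P w) {i : ℕ} (hi : i + 1 < w.length) :
    startsFactor P (i + 1) ↔ w[i + 1].2 ≤ w[i].2 := by
  induction P generalizing w i with
  | nil => simp [← hP.1] at hi
  | cons b P ih =>
    obtain ⟨rfl, hne, hinc, hmax⟩ := hP
    have hP : IsOrderedPartition P P.flatten :=
      ⟨rfl, fun c hc => hne c (List.mem_cons_of_mem _ hc),
        fun c hc => hinc c (List.mem_cons_of_mem _ hc), hmax.tail⟩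
    simp only [List.flatten_cons, List.length_append] at hi ⊢
    rw [startsFactor_cons]
    rcases lt_trichotomy (i + 1) b.length with h | h | h
    · have hlt : b[i].2 < b[i + 1].2 := by
        have hb := (List.isChain_map Prod.snd).1 (hinc b List.mem_cons_self)
        exact List.isChain_iff_getElem.1 hb i h
      rw [List.getElem_append_left h, List.getElem_append_left (by omega)]
      constructor
      · rintro (h0 | ⟨k, hk, -⟩) <;> omega
      · exact fun hle => absurd hle (not_le.2 hlt)
    · have hP_ne : P ≠ [] := by rintro rfl; simp at hi; omega
      obtain ⟨c, P, rfl⟩ := List.exists_cons_of_ne_nil hP_ne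
      obtain ⟨a, t, rfl⟩ := List.exists_cons_of_ne_nil (hne c (by simp))
      refine iff_of_true (.inr ⟨0, by omega, startsFactor_zero (List.cons_ne_nil _ _)⟩) ?_
      rw [List.getElem_append_right (by omega), List.getElem_append_left (by omega)]
      refine List.rel_of_isChain_cons_cons hmax _ (by simp [h]) _ ?_
      simp [List.getLast?_eq_getElem?, ← h]
    · obtain ⟨k, rfl⟩ := Nat.exists_eq_add_of_le (Nat.le_of_lt_succ h)
      rw [List.getElem_append_right (by omega), List.getElem_append_right (by omega)]
      simp only [show b.length + k + 1 - b.length = k + 1 by omega, Nat.add_sub_cancel_left]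
      rw [← ih hP (by omega)]
      constructor
      · rintro (h0 | ⟨k', hk', hk⟩)
        · omega
        · obtain rfl : k' = k + 1 := by omega
          exact hk
      · exact fun hk => .inr ⟨k + 1, by omega, hk⟩

lemma snd_eq_of_mem_head?_of_isChain_sublist {Q : List (List (A × D))} {d : D}
    (hne : ∀ b ∈ Q, b ≠ []) (hinc : ∀ b ∈ Q, (b.map Prod.snd).IsChain (· < ·))
    (hsub : Q.IsChain fun b c => (b.map Prod.snd).Sublist (c.map Prod.snd))
    (hmin : ∀ p ∈ Q.flatten, d ≤ p.2) (hd : d ∈ (Q.flatten.map Prod.snd).head?) :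
    ∀ b ∈ Q, ∀ p ∈ b.head?, p.2 = d := by
  obtain ⟨b₀, Q, rfl⟩ := List.exists_cons_of_ne_nil (show Q ≠ [] by rintro rfl; simp at hd)
  obtain ⟨a, t, rfl⟩ := List.exists_cons_of_ne_nil (hne b₀ List.mem_cons_self)
  have hd_mem : ∀ b ∈ (a :: t) :: Q, d ∈ b.map Prod.snd :=
    List.mem_of_isChain_sublist hsub (by simp_all)
  intro b hb p hp
  refine le_antisymm ?_ (hmin p (List.mem_flatten_of_mem hb (List.mem_of_mem_head? hp)))
  have hp_data : p.2 ∈ (b.map Prod.snd).head? := by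
    rw [List.head?_map]
    exact Option.mem_map_of_mem _ hp
  exact List.head_le_of_isChain_lt (hinc b hb) (hd_mem b hb) hp_data

/-- In a data braid, the positions carrying the first datum `d₁` (the marked positions)
are exactly the positions starting some factor of the ordered partition. -/
theorem dataBraid_marked_iff_startsFactor (marked : A → Prop) (w : List (A × D))
    (hw : w ≠ []) (hb : IsDataBraid marked w)
    (P : List (List (A × D))) (hP : IsOrderedPartition P w) :
    ∀ i (hi : i < w.length),
      (w.get ⟨i, hi⟩).2 = (w.head hw).2 ↔ startsFactor P i := by
  intro i hi
  obtain ⟨Q, hQ, hbraid, hsub⟩ := hb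
  have hd₁ : (w.head hw).2 ∈ (w.map Prod.snd).head? := by simp [List.head?_eq_some_head hw]
  obtain ⟨hmin, -⟩ := hbraid _ hd₁
  have hQ_heads := snd_eq_of_mem_head?_of_isChain_sublist hQ.2.1 hQ.2.2.1 hsub
    (by rwa [hQ.1]) (by rwa [hQ.1])
  rw [List.get_eq_getElem]
  rcases i with _ | i
  · simpa [List.head_eq_getElem] using startsFactor_zero (by rintro rfl; exact hw hP.1.symm)
  rw [hP.startsFactor_succ_iff hi]
  constructor
  · intro h
    exact h ▸ hmin _ (List.getElem_mem _)
  · intro h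
    obtain ⟨b, hb, hp⟩ :=
      exists_mem_head?_of_startsFactor hQ.1 hQ.2.1 ((hQ.startsFactor_succ_iff hi).2 h) hi
    exact hQ_heads b hb _ hp
end

section
/- A timed word obtained from a data braid is a timed braid: let w = (a_1,d_1)...(a_n,d_n) be a data braid with ordered partition into k factors, let f be an order-preserving injection from the set of data values of w into [0,1) with f(d_1) = 0, and define t_i = c_i + f(d_i) where c_i is the number of factors ending strictly before position i; then (a_1,t_1)...(a_n,t_n) is a timed braid, i.e., t_1 = 0, the t_i are strictly increasing, positions with integer time stamp are exactly the marked positions, and for all i < n with t_i < ⌊t_n⌋, t_i + 1 appears among t_{i+1},...,t_n. -/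
variable {A : Type*} {D : Type*} [LinearOrder D]

/-- A timed braid w.r.t. a marking of the alphabet: the first time stamp is `0`, time
stamps are strictly increasing, the marked positions are exactly those with integer
time stamps, and whenever `t i < ⌊t n⌋` the value `t i + 1` appears later. -/
def IsTimedBraid {A : Type*} (marked : A → Prop) (u : List (A × ℝ)) : Prop :=
  (∀ p ∈ u.head?, (p : A × ℝ).2 = 0) ∧
  (u.map Prod.snd).Chain' (· < ·) ∧
  (∀ p ∈ u, marked p.1 ↔ ∃ k : ℤ, p.2 = (k : ℝ)) ∧
  (∀ q ∈ u.getLast?, ∀ i (hi : i < u.length),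
    (u.get ⟨i, hi⟩).2 < (⌊(q : A × ℝ).2⌋ : ℝ) →
    ∃ j, ∃ hj : j < u.length, i < j ∧ (u.get ⟨j, hj⟩).2 = (u.get ⟨i, hi⟩).2 + 1)

/-- The number of factors of the partition `P` ending strictly before position `i`. -/
def factorsEndedBefore {α : Type*} (P : List (List α)) (i : ℕ) : ℕ :=
  (List.range P.length).countP (fun j => decide (((P.take (j+1)).map List.length).sum ≤ i))

/-!
Write `t i = c i + f (d i)`, where `c i` is the index of the factor containing position `i`.
Since `f` takes values in `[0,1)`, `⌊t i⌋ = c i` and `fract (t i) = f (d i)`. Hence time stamps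
compare lexicographically by (factor, datum), so they increase because every factor is strictly
increasing in the data, and `t i` is an integer iff `f (d i) = 0` iff `d i = d 1`. If
`t i < ⌊t n⌋`, the factor of `i` is not the last one; as its data form a subsequence of the data of
the next factor, `d i` occurs there, at a position with time stamp `t i + 1`.

The subsequence condition of a data braid refers to its own ordered partition, but ordered
partitions are unique: they are the splitting into maximal strictly increasing runs.
-/

section FactorStart

variable {α : Type*} {P : List (List α)} {i j m : ℕ}

def factorStart (P : List (List α)) (j : ℕ) : ℕ := ((P.take j).map List.length).sum

@[simp]
theorem factorStart_zero : factorStart P 0 = 0 := by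
  simp [factorStart]

@[simp]
theorem factorStart_cons_succ (b : List α) :
    factorStart (b :: P) (j + 1) = b.length + factorStart P j := by
  simp [factorStart]

theorem factorStart_succ (hj : j < P.length) :
    factorStart P (j + 1) = factorStart P j + P[j].length := by
  simp only [factorStart, List.map_take]
  rw [List.sum_take_succ _ _ (by simpa using hj), List.getElem_map]

theorem factorStart_mono : Monotone (factorStart P) := by
  intro j j' h
  obtain ⟨t, ht⟩ := List.take_prefix_take_left h (l := P.map List.length)
  simp only [factorStart, List.map_take, ← ht, List.sum_append]
  omega

theorem factorStart_length : factorStart P P.length = P.flatten.length := by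
  simp [factorStart]

theorem factorStart_add_lt_length (hj : j < P.length) (hm : m < P[j].length) :
    factorStart P j + m < P.flatten.length := by
  have := factorStart_mono (P := P) (Nat.succ_le_of_lt hj)
  rw [factorStart_succ hj, factorStart_length] at this
  omega

theorem getElem_flatten_factorStart_add (hj : j < P.length) (hm : m < P[j].length) :
    P.flatten[factorStart P j + m]'(factorStart_add_lt_length hj hm) = P[j][m] := by
  have h := congrArg (·[m]?) (List.drop_sum_flatten P j)
  simp only [List.getElem?_drop, ← List.map_take, List.drop_eq_getElem_cons hj,
    List.flatten_cons, List.getElem?_append_left hm, List.getElem?_eq_getElem hm] at h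
  exact (List.getElem?_eq_some_iff.mp h).2

theorem exists_eq_factorStart_add (hi : i < P.flatten.length) :
    ∃ j, ∃ hj : j < P.length, ∃ m, ∃ _ : m < P[j].length, i = factorStart P j + m := by
  induction P generalizing i with
  | nil => simp at hi
  | cons b P ih =>
    by_cases hib : i < b.length
    · exact ⟨0, by simp, i, hib, by simp⟩
    · obtain ⟨j, hj, m, hm, hi'⟩ := ih (i := i - b.length) (by simp at hi ⊢; omega)
      exact ⟨j + 1, by simpa using hj, m, hm, by simp; omega⟩

theorem factorsEndedBefore_mono : Monotone (factorsEndedBefore P) := by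
  intro i i' h
  refine List.countP_mono_left fun k _ hk => ?_
  simp only [decide_eq_true_eq] at hk ⊢
  omega

theorem factorsEndedBefore_factorStart_add (hj : j < P.length) (hm : m < P[j].length) :
    factorsEndedBefore P (factorStart P j + m) = j := by
  change Nat.count (fun k => factorStart P (k + 1) ≤ factorStart P j + m) P.length = j
  obtain ⟨n, hn⟩ := Nat.exists_eq_add_of_le hj.le
  rw [hn, Nat.count_add, Nat.count_of_forall, Nat.count_of_forall_not, add_zero]
  · intro k _ hk
    have := factorStart_mono (P := P) (show j + 1 ≤ j + k + 1 by omega)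
    rw [factorStart_succ hj] at this
    omega
  · intro k hk
    exact (factorStart_mono (P := P) hk).trans (Nat.le_add_right _ _)

theorem factorsEndedBefore_lt_length (hi : i < P.flatten.length) :
    factorsEndedBefore P i < P.length := by
  obtain ⟨j, hj, m, hm, rfl⟩ := exists_eq_factorStart_add hi
  rwa [factorsEndedBefore_factorStart_add hj hm]

theorem factorsEndedBefore_zero (hne : ∀ b ∈ P, b ≠ []) : factorsEndedBefore P 0 = 0 := by
  refine List.countP_eq_zero.mpr fun k hk => ?_
  have hP : 0 < P.length := by simp at hk; omega
  have := factorStart_mono (P := P) (show 1 ≤ k + 1 by omega)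
  rw [factorStart_succ hP, factorStart_zero] at this
  have := List.length_pos_iff.mpr (hne _ (List.getElem_mem hP))
  simp only [decide_eq_true_eq, not_le]
  change 0 < factorStart P (k + 1)
  omega

end FactorStart

theorem IsOrderedPartition.eq_splitBy {P : List (List (A × D))} {w : List (A × D)}
    (hP : IsOrderedPartition P w) : P = w.splitBy fun x y => decide (x.2 < y.2) := by
  obtain ⟨rfl, hne, hinc, hmax⟩ := hP
  refine (List.splitBy_flatten (fun h => hne [] h rfl) (fun b hb => ?_) ?_).symm
  · simpa using (List.isChain_map _).mp (hinc b hb)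
  · refine List.IsChain.imp_of_mem_imp (fun b c hb hc hbc => ⟨hne b hb, hne c hc, ?_⟩) hmax
    have := hbc (c.head (hne c hc)).2 (by simp [List.head?_eq_some_head (hne c hc)])
      (b.getLast (hne b hb)).2 (by simp [List.getLast?_eq_some_getLast (hne b hb)])
    simpa using this

theorem IsOrderedPartition.unique {P Q : List (List (A × D))} {w : List (A × D)}
    (hP : IsOrderedPartition P w) (hQ : IsOrderedPartition Q w) : P = Q :=
  hP.eq_splitBy.trans hQ.eq_splitBy.symm

theorem marked_iff_apply_eq_zero {marked : A → Prop} {w : List (A × D)} {f : D → ℝ}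
    (hmarked : ∀ d₁ ∈ (w.map Prod.snd).head?, ∀ p ∈ w, marked p.1 ↔ p.2 = d₁)
    (hmono : ∀ p ∈ w, ∀ q ∈ w, p.2 < q.2 → f p.2 < f q.2)
    (hf1 : ∀ p ∈ w.head?, f p.2 = 0) : ∀ p ∈ w, marked p.1 ↔ f p.2 = 0 := by
  cases w with
  | nil => simp
  | cons p₀ w =>
    have hf : StrictMonoOn f {d | ∃ p ∈ p₀ :: w, p.2 = d} := by
      rintro _ ⟨p, hp, rfl⟩ _ ⟨q, hq, rfl⟩
      exact hmono p hp q hq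
    intro p hp
    rw [hmarked p₀.2 (by simp) p hp, ← hf1 p₀ (by simp),
      hf.injOn.eq_iff ⟨p, hp, rfl⟩ ⟨p₀, List.mem_cons_self, rfl⟩]

section TimedWord

variable {α β δ : Type*} {P : List (List α)} {f : δ → ℝ} {w : List (β × δ)} {i : ℕ}

def toTimedWord (P : List (List α)) (f : δ → ℝ) (w : List (β × δ)) : List (β × ℝ) :=
  w.mapIdx fun i p => (p.1, (factorsEndedBefore P i : ℝ) + f p.2)

@[simp]
theorem length_toTimedWord : (toTimedWord P f w).length = w.length :=
  List.length_mapIdx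

@[simp]
theorem getElem_toTimedWord (hi : i < (toTimedWord P f w).length) :
    (toTimedWord P f w)[i] = ((w[i]'(by simpa using hi)).1,
      (factorsEndedBefore P i : ℝ) + f (w[i]'(by simpa using hi)).2) :=
  List.getElem_mapIdx

theorem snd_eq_zero_of_mem_head?_toTimedWord (hstart : factorsEndedBefore P 0 = 0)
    (hf : ∀ p ∈ w.head?, f p.2 = 0) : ∀ q ∈ (toTimedWord P f w).head?, q.2 = 0 := by
  intro q hq
  rw [List.head?_eq_getElem?, Option.mem_def, List.getElem?_eq_some_iff] at hq
  obtain ⟨h0, rfl⟩ := hq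
  rw [getElem_toTimedWord, hstart, Nat.cast_zero, zero_add]
  exact hf _ (by simp [List.head?_eq_getElem?])

theorem marked_iff_exists_intCast_of_mem_toTimedWord {marked : β → Prop}
    (hrange : ∀ p ∈ w, f p.2 ∈ Set.Ico (0 : ℝ) 1)
    (hmarked : ∀ p ∈ w, marked p.1 ↔ f p.2 = 0) :
    ∀ q ∈ toTimedWord P f w, marked q.1 ↔ ∃ k : ℤ, q.2 = k := by
  rintro _ hq
  obtain ⟨i, hi, rfl⟩ := List.mem_mapIdx.mp hq
  have hfract : Int.fract ((factorsEndedBefore P i : ℝ) + f w[i].2) = f w[i].2 := by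
    rw [Int.fract_natCast_add, Int.fract_eq_self.mpr (hrange _ (List.getElem_mem hi))]
  rw [hmarked _ (List.getElem_mem hi)]
  conv_lhs => rw [← hfract, Int.fract_eq_zero_iff]
  exact exists_congr fun k => eq_comm

end TimedWord

section TimedWordOfPartition

variable {β δ : Type*} {P : List (List (β × δ))} {f : δ → ℝ} {i : ℕ}

theorem snd_getElem_toTimedWord_flatten {j m : ℕ} (hj : j < P.length) (hm : m < P[j].length)
    (hi : i = factorStart P j + m) (h : i < (toTimedWord P f P.flatten).length) :
    (toTimedWord P f P.flatten)[i].2 = j + f P[j][m].2 := by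
  subst hi
  simp [factorsEndedBefore_factorStart_add hj hm, getElem_flatten_factorStart_add hj hm]

theorem isChain_map_snd_toTimedWord_flatten [LinearOrder δ]
    (hinc : ∀ b ∈ P, (b.map Prod.snd).IsChain (· < ·))
    (hrange : ∀ p ∈ P.flatten, f p.2 ∈ Set.Ico (0 : ℝ) 1)
    (hmono : ∀ p ∈ P.flatten, ∀ q ∈ P.flatten, p.2 < q.2 → f p.2 < f q.2) :
    ((toTimedWord P f P.flatten).map Prod.snd).IsChain (· < ·) := by
  rw [List.isChain_map, List.isChain_iff_getElem]
  intro i hi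
  have hi' : i + 1 < P.flatten.length := by simpa using hi
  obtain ⟨j, hj, m, hm, hjm⟩ := exists_eq_factorStart_add (P := P) (i := i) (by omega)
  obtain ⟨j', hj', m', hm', hjm'⟩ := exists_eq_factorStart_add hi'
  have hjj' : j ≤ j' := by
    have := factorsEndedBefore_mono (P := P) (Nat.le_add_right i 1)
    rwa [hjm', hjm, factorsEndedBefore_factorStart_add hj hm,
      factorsEndedBefore_factorStart_add hj' hm'] at this
  rw [snd_getElem_toTimedWord_flatten hj hm hjm, snd_getElem_toTimedWord_flatten hj' hm' hjm']
  have hmem {j m : ℕ} (hj : j < P.length) (hm : m < P[j].length) : P[j][m] ∈ P.flatten :=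
    List.mem_flatten_of_mem (List.getElem_mem hj) (List.getElem_mem hm)
  rcases hjj'.eq_or_lt with rfl | hlt
  · obtain rfl : m' = m + 1 := by omega
    have hlt : P[j][m].2 < P[j][m + 1].2 := by
      have := List.isChain_iff_getElem.mp (hinc _ (List.getElem_mem hj)) m (by simpa using hm')
      simpa using this
    linarith [hmono _ (hmem hj hm) _ (hmem hj hm') hlt]
  · have h1 := hrange _ (hmem hj hm)
    have h2 := hrange _ (hmem hj' hm')
    have : (j : ℝ) + 1 ≤ j' := by exact_mod_cast hlt
    simp only [Set.mem_Ico] at h1 h2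
    linarith

theorem factorsEndedBefore_add_one_lt_length
    (hrange : ∀ p ∈ P.flatten, f p.2 ∈ Set.Ico (0 : ℝ) 1) {q : β × ℝ}
    (hq : q ∈ (toTimedWord P f P.flatten).getLast?) (hi : i < (toTimedWord P f P.flatten).length)
    (hlt : (toTimedWord P f P.flatten)[i].2 < ⌊q.2⌋) :
    factorsEndedBefore P i + 1 < P.length := by
  rw [List.getLast?_eq_getElem?, Option.mem_def, List.getElem?_eq_some_iff] at hq
  obtain ⟨hn, rfl⟩ := hq
  have hw : ∀ k (hk : k < (toTimedWord P f P.flatten).length),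
      f (P.flatten[k]'(by simpa using hk)).2 ∈ Set.Ico (0 : ℝ) 1 :=
    fun k _ => hrange _ (List.getElem_mem _)
  have hlast : factorsEndedBefore P ((toTimedWord P f P.flatten).length - 1) < P.length :=
    factorsEndedBefore_lt_length (by simpa using hn)
  rw [getElem_toTimedWord, getElem_toTimedWord, Int.floor_natCast_add,
    Int.floor_eq_zero_iff.mpr (hw _ hn), add_zero, Int.cast_natCast] at hlt
  have hlt' : (factorsEndedBefore P i : ℝ) <
      factorsEndedBefore P ((toTimedWord P f P.flatten).length - 1) := by
    linarith [(hw i hi).1]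
  have := Nat.cast_lt.mp hlt'
  omega

theorem exists_toTimedWord_flatten_eq_add_one
    (hsub : P.IsChain fun b c => (b.map Prod.snd).Sublist (c.map Prod.snd))
    (hi : i < (toTimedWord P f P.flatten).length) (hnext : factorsEndedBefore P i + 1 < P.length) :
    ∃ i', ∃ hi' : i' < (toTimedWord P f P.flatten).length, i < i' ∧
      (toTimedWord P f P.flatten)[i'].2 = (toTimedWord P f P.flatten)[i].2 + 1 := by
  obtain ⟨j, hj, m, hm, hjm⟩ := exists_eq_factorStart_add (P := P) (by simpa using hi)
  rw [hjm, factorsEndedBefore_factorStart_add hj hm] at hnext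
  have hsubj : (P[j].map Prod.snd).Sublist (P[j + 1].map Prod.snd) := by
    simpa using List.isChain_iff_getElem.mp hsub j (by simpa using hnext)
  obtain ⟨m', hm', hdat⟩ :=
    List.mem_iff_getElem.mp (hsubj.mem (List.mem_map_of_mem (List.getElem_mem hm)))
  have hm'' : m' < P[j + 1].length := by simpa using hm'
  refine ⟨factorStart P (j + 1) + m', by simpa using factorStart_add_lt_length hnext hm'',
    by rw [factorStart_succ hj]; omega, ?_⟩
  rw [snd_getElem_toTimedWord_flatten hnext hm'' rfl, snd_getElem_toTimedWord_flatten hj hm hjm]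
  simp only [List.getElem_map] at hdat
  rw [hdat]
  push_cast
  ring

end TimedWordOfPartition

/-- The timed word obtained from a data braid — via an order-preserving injection `f`
of its data values into `[0,1)` sending the first datum to `0`, with integer parts
counting the factors of the ordered partition ended strictly before each position —
is a timed braid. -/
theorem timedBraid_of_dataBraid (marked : A → Prop) (w : List (A × D))
    (hb : IsDataBraid marked w)
    (P : List (List (A × D))) (hP : IsOrderedPartition P w)
    (f : D → ℝ)
    (hrange : ∀ p ∈ w, f p.2 ∈ Set.Ico (0:ℝ) 1)
    (hmono : ∀ p ∈ w, ∀ q ∈ w, p.2 < q.2 → f p.2 < f q.2)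
    (hf1 : ∀ p ∈ w.head?, f (p : A × D).2 = 0) :
    IsTimedBraid marked
      (w.mapIdx (fun i p => (p.1, (factorsEndedBefore P i : ℝ) + f p.2))) := by
  obtain ⟨P₀, hP₀, hfirst, hsub⟩ := hb
  rw [hP₀.unique hP] at hsub
  have hmarked := marked_iff_apply_eq_zero (fun d hd => (hfirst d hd).2) hmono hf1
  obtain ⟨rfl, hne, hinc, -⟩ := hP
  exact ⟨snd_eq_zero_of_mem_head?_toTimedWord (factorsEndedBefore_zero hne) hf1,
    isChain_map_snd_toTimedWord_flatten hinc hrange hmono,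
    marked_iff_exists_intCast_of_mem_toTimedWord hrange hmarked,
    fun q hq i hi hlt => exists_toTimedWord_flatten_eq_add_one hsub hi
      (factorsEndedBefore_add_one_lt_length hrange hq hi hlt)⟩
end

section
/- A data word obtained from a timed braid by taking fractional parts is a data braid: if w = (a_1,t_1)...(a_n,t_n) is a timed braid and one replaces each time stamp t_i by its fractional part {t_i} (taking D = [0,1) ⊆ ℝ with its usual order as the data domain), then the resulting data word (a_1,{t_1})...(a_n,{t_n}) is a data braid. -/
variable {A : Type*} {D : Type*} [LinearOrder D]

/-! Cut the timed braid into the blocks of positions sharing the integer part `n` of their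
time stamp, for `n = 0, …, ⌊t_last⌋`. Within a block the fractional parts increase strictly.
Every stamp `t` of a non-final block has `t < ⌊t_last⌋`, so `t + 1` occurs and lies in the next
block with the same fractional part: the data of a block are a subset, hence (both lists being
strictly increasing) a subsequence, of the data of the next one. This also makes the
partition maximal and shows by induction that no block is empty. The first datum is
`{0} = 0`, the least possible, and `{t} = 0` exactly at integer stamps. -/

open List

lemma List.head_le_of_mem_of_isChain_lt {D : Type*} [LinearOrder D] {l : List D}
    (hl : l.IsChain (· < ·)) {x y : D} (hx : x ∈ l.head?) (hy : y ∈ l) : x ≤ y := by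
  obtain ⟨t, rfl⟩ : ∃ t, l = x :: t := by
    cases l with
    | nil => simp at hx
    | cons a t => simp_all
  rcases mem_cons.mp hy with rfl | hy
  · exact le_rfl
  · exact ((pairwise_cons.mp (isChain_iff_pairwise.mp hl)).1 y hy).le

lemma List.sublist_of_subset_of_isChain_lt {D : Type*} [LinearOrder D] {l₁ l₂ : List D}
    (hs : l₁ ⊆ l₂) (h₁ : l₁.IsChain (· < ·)) (h₂ : l₂.IsChain (· < ·)) : l₁ <+ l₂ := by
  have h₁ := isChain_iff_pairwise.mp h₁
  exact sublist_of_subperm_of_pairwise (subperm_of_subset h₁.nodup hs) h₁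
    (isChain_iff_pairwise.mp h₂)

lemma isDataBraid_of_isChain_sublist (marked : A → Prop) {w : List (A × D)}
    (P : List (List (A × D))) (hflat : P.flatten = w) (hne : ∀ b ∈ P, b ≠ [])
    (hlt : ∀ b ∈ P, (b.map Prod.snd).IsChain (· < ·))
    (hsub : P.IsChain (fun b c => (b.map Prod.snd).Sublist (c.map Prod.snd)))
    (hfirst : ∀ d₁ ∈ (w.map Prod.snd).head?,
      (∀ p ∈ w, d₁ ≤ p.2) ∧ (∀ p ∈ w, marked p.1 ↔ p.2 = d₁)) :
    IsDataBraid marked w := by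
  refine ⟨P, ⟨hflat, hne, hlt, ?_⟩, hfirst, hsub⟩
  refine hsub.imp_of_mem_imp fun b c _ hc hbc x hx y hy => ?_
  exact head_le_of_mem_of_isChain_lt (hlt c hc) hx (hbc.subset (mem_of_mem_getLast? hy))

noncomputable def timeBlock (u : List (A × ℝ)) (n : ℕ) : List (A × ℝ) :=
  u.filter (fun p => ⌊p.2⌋ = n)

lemma mem_timeBlock {u : List (A × ℝ)} {n : ℕ} {p : A × ℝ} :
    p ∈ timeBlock u n ↔ p ∈ u ∧ ⌊p.2⌋ = n := by
  simp [timeBlock]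

lemma isChain_fract_timeBlock {u : List (A × ℝ)} (hu : u.Pairwise (fun p q => p.2 < q.2))
    (n : ℕ) : ((timeBlock u n).map (fun p => Int.fract p.2)).IsChain (· < ·) := by
  rw [isChain_map, isChain_iff_pairwise]
  refine (hu.sublist filter_sublist).imp_of_mem fun {p q} hp hq hpq => ?_
  have hfloor : (⌊p.2⌋ : ℝ) = ⌊q.2⌋ := by
    rw [(mem_timeBlock.mp hp).2, (mem_timeBlock.mp hq).2]
  rw [Int.fract, Int.fract, hfloor]
  linarith

lemma flatten_map_timeBlock {u : List (A × ℝ)} {m : ℕ}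
    (hu : u.Pairwise (fun p q => p.2 < q.2)) (hm : ∀ p ∈ u, 0 ≤ p.2 ∧ p.2 < m) :
    ((range m).map (timeBlock u)).flatten = u := by
  have : Std.Irrefl (fun p q : A × ℝ => p.2 < q.2) := ⟨fun p => lt_irrefl p.2⟩
  have : Std.Antisymm (fun p q : A × ℝ => p.2 < q.2) := ⟨fun _ _ h h' => (lt_asymm h h').elim⟩
  refine Pairwise.eq_of_mem_iff ?_ hu fun p => ?_
  · refine pairwise_flatten.mpr ⟨?_, ?_⟩
    · simp only [mem_map, mem_range]
      rintro _ ⟨n, -, rfl⟩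
      exact hu.sublist filter_sublist
    · refine pairwise_map.mpr ((pairwise_lt_range (n := m)).imp fun {n n'} hnn' p hp q hq => ?_)
      refine Int.floor_mono.reflect_lt ?_
      rw [(mem_timeBlock.mp hp).2, (mem_timeBlock.mp hq).2]
      exact_mod_cast hnn'
  · simp only [mem_flatten, mem_map, mem_range]
    constructor
    · rintro ⟨_, ⟨n, -, rfl⟩, hp⟩
      exact (mem_timeBlock.mp hp).1
    · intro hp
      have hfloor : 0 ≤ ⌊p.2⌋ := Int.floor_nonneg.mpr (hm p hp).1
      refine ⟨_, ⟨⌊p.2⌋.toNat, ?_, rfl⟩, mem_timeBlock.mpr ⟨hp, (Int.toNat_of_nonneg hfloor).symm⟩⟩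
      have : ⌊p.2⌋ < m := Int.floor_lt.mpr (by exact_mod_cast (hm p hp).2)
      omega

namespace IsTimedBraid

variable {marked : A → Prop} {u : List (A × ℝ)}

lemma pairwise_lt (h : IsTimedBraid marked u) : u.Pairwise (fun p q => p.2 < q.2) :=
  pairwise_map.mp (isChain_iff_pairwise.mp h.2.1)

lemma nonneg (h : IsTimedBraid marked u) {p : A × ℝ} (hp : p ∈ u) : 0 ≤ p.2 := by
  cases u with
  | nil => simp at hp
  | cons a t =>
    have ha : a.2 = 0 := h.1 a rfl
    rcases mem_cons.mp hp with rfl | hp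
    · exact ha.ge
    · exact ha ▸ ((pairwise_cons.mp h.pairwise_lt).1 p hp).le

lemma le_getLast (h : IsTimedBraid marked u) (hu : u ≠ []) {p : A × ℝ} (hp : p ∈ u) :
    p.2 ≤ (u.getLast hu).2 := by
  have hsplit := dropLast_append_getLast hu
  rw [← hsplit, mem_append, mem_singleton] at hp
  rcases hp with hp | rfl
  · have hpw := h.pairwise_lt
    rw [← hsplit, pairwise_append] at hpw
    exact (hpw.2.2 p hp _ (mem_singleton_self _)).le
  · exact le_rfl

lemma toNat_floor_getLast (h : IsTimedBraid marked u) (hu : u ≠ []) :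
    (⌊(u.getLast hu).2⌋.toNat : ℤ) = ⌊(u.getLast hu).2⌋ :=
  Int.toNat_of_nonneg (Int.floor_nonneg.mpr (h.nonneg (getLast_mem hu)))

protected lemma flatten_map_timeBlock (h : IsTimedBraid marked u) (hu : u ≠ []) :
    ((range (⌊(u.getLast hu).2⌋.toNat + 1)).map (timeBlock u)).flatten = u := by
  refine flatten_map_timeBlock h.pairwise_lt fun p hp => ⟨h.nonneg hp, ?_⟩
  refine (h.le_getLast hu hp).trans_lt ?_
  have hlast := Int.lt_floor_add_one (u.getLast hu).2
  rw [← h.toNat_floor_getLast hu] at hlast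
  exact_mod_cast hlast

lemma exists_add_one (h : IsTimedBraid marked u) (hu : u ≠ []) {p : A × ℝ} (hp : p ∈ u)
    (hlt : p.2 < ⌊(u.getLast hu).2⌋) : ∃ q ∈ u, q.2 = p.2 + 1 := by
  obtain ⟨⟨i, hi⟩, rfl⟩ := get_of_mem hp
  obtain ⟨j, hj, -, hq⟩ := h.2.2.2 _ (getLast_mem_getLast? hu) i hi hlt
  exact ⟨_, get_mem u ⟨j, hj⟩, hq⟩

lemma marked_iff_fract_eq_zero (h : IsTimedBraid marked u) {p : A × ℝ} (hp : p ∈ u) :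
    marked p.1 ↔ Int.fract p.2 = 0 := by
  rw [h.2.2.1 p hp, Int.fract_eq_zero_iff]
  exact exists_congr fun k => eq_comm

lemma head_fract_eq_zero (h : IsTimedBraid marked u) {d : ℝ}
    (hd : d ∈ (u.map fun p => Int.fract p.2).head?) : d = 0 := by
  cases u with
  | nil => simp at hd
  | cons a t =>
    rw [map_cons, head?_cons, Option.mem_some_iff] at hd
    rw [← hd, h.1 a rfl, Int.fract_zero]

lemma fract_first_datum (h : IsTimedBraid marked u) :
    ∀ d₁ ∈ ((u.map fun p => (p.1, Int.fract p.2)).map Prod.snd).head?,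
      (∀ p ∈ u.map fun p => (p.1, Int.fract p.2), d₁ ≤ p.2) ∧
      (∀ p ∈ u.map fun p => (p.1, Int.fract p.2), marked p.1 ↔ p.2 = d₁) := by
  intro d hd
  obtain rfl : d = 0 := h.head_fract_eq_zero (by rwa [map_map] at hd)
  simp only [mem_map]
  constructor
  · rintro _ ⟨p, -, rfl⟩
    exact Int.fract_nonneg _
  · rintro _ ⟨p, hp, rfl⟩
    exact h.marked_iff_fract_eq_zero hp

lemma fract_timeBlock_subset (h : IsTimedBraid marked u) (hu : u ≠ []) {n : ℕ}
    (hn : (n : ℤ) < ⌊(u.getLast hu).2⌋) :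
    (timeBlock u n).map (fun p => Int.fract p.2) ⊆
      (timeBlock u (n + 1)).map (fun p => Int.fract p.2) := by
  intro x hx
  obtain ⟨p, hp, rfl⟩ := mem_map.mp hx
  obtain ⟨hpu, hpn⟩ := mem_timeBlock.mp hp
  have hlt : p.2 < ⌊(u.getLast hu).2⌋ := calc
    p.2 < ⌊p.2⌋ + 1 := Int.lt_floor_add_one p.2
    _ ≤ ⌊(u.getLast hu).2⌋ := by rw [hpn]; exact_mod_cast hn
  obtain ⟨q, hqu, hq⟩ := h.exists_add_one hu hpu hlt
  refine mem_map.mpr ⟨q, mem_timeBlock.mpr ⟨hqu, ?_⟩, ?_⟩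
  · rw [hq, Int.floor_add_one, hpn]
    push_cast
    rfl
  · rw [hq, Int.fract_add_one]

lemma timeBlock_ne_nil (h : IsTimedBraid marked u) (hu : u ≠ []) {n : ℕ}
    (hn : (n : ℤ) ≤ ⌊(u.getLast hu).2⌋) : timeBlock u n ≠ [] := by
  induction n with
  | zero =>
    obtain ⟨a, t, rfl⟩ := exists_cons_of_ne_nil hu
    exact ne_nil_of_mem (mem_timeBlock.mpr ⟨mem_cons_self, by simp [h.1 a rfl]⟩)
  | succ n ih =>
    have hn' : (n : ℤ) < ⌊(u.getLast hu).2⌋ := by omega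
    obtain ⟨p, hp⟩ := exists_mem_of_ne_nil _ (ih hn'.le)
    have hx := h.fract_timeBlock_subset hu hn' (mem_map_of_mem hp)
    exact ne_nil_of_length_pos (length_map _ ▸ length_pos_of_mem hx)

end IsTimedBraid

/-- Replacing each time stamp of a timed braid by its fractional part (data domain
`[0,1) ⊆ ℝ` with the usual order) yields a data braid. -/
theorem dataBraid_of_timedBraid {A : Type*} (marked : A → Prop) (u : List (A × ℝ))
    (h : IsTimedBraid marked u) :
    IsDataBraid marked (u.map (fun p => (p.1, Int.fract p.2))) := by
  rcases eq_or_ne u [] with rfl | hu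
  · exact isDataBraid_of_isChain_sublist marked [] rfl (by simp) (by simp) .nil (by simp)
  set N := ⌊(u.getLast hu).2⌋.toNat
  have hN : (N : ℤ) = ⌊(u.getLast hu).2⌋ := h.toNat_floor_getLast hu
  refine isDataBraid_of_isChain_sublist marked
    ((range (N + 1)).map fun n => (timeBlock u n).map fun p => (p.1, Int.fract p.2)) ?_ ?_ ?_ ?_
    h.fract_first_datum
  · conv_rhs => rw [← h.flatten_map_timeBlock hu]
    rw [map_flatten, map_map]
    rfl
  · simp only [mem_map, mem_range]
    rintro _ ⟨n, hn, rfl⟩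
    exact mt map_eq_nil_iff.mp (h.timeBlock_ne_nil hu (by omega))
  · simp only [mem_map, mem_range]
    rintro _ ⟨n, -, rfl⟩
    rw [map_map]
    exact isChain_fract_timeBlock h.pairwise_lt n
  · rw [isChain_map, isChain_range_succ]
    intro n hn
    simp only [map_map]
    exact sublist_of_subset_of_isChain_lt (h.fract_timeBlock_subset hu (by omega))
      (isChain_fract_timeBlock h.pairwise_lt n) (isChain_fract_timeBlock h.pairwise_lt (n + 1))
end

section
/- Composing the braid transformations returns to the original word up to isomorphism: starting from a timed braid w, taking fractional parts to obtain a data braid, and then converting this data braid back into a timed braid via any order-preserving injection f : D' → [0,1) with f(d_1) = 0 (where D' is the set of occurring data) and integer parts counting preceding factor-ends, yields a timed word equal to g(w) for some time isomorphism g (an order-preserving bijection of [0,1)), i.e., each resulting time stamp has the same integer part as the corresponding original one and fractional parts related by a single order-preserving bijection of [0,1). -/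
/-!
Integer parts: `⌊tᵢ⌋` and the number of factors ended before `i` both start at `0` and go up
by one exactly at the descents `{tᵢ₊₁} ≤ {tᵢ}` of the fractional parts. For the timed braid this
holds because consecutive time stamps differ by at most `1` (otherwise `tᵢ + 1` could not occur
later); for the ordered partition because factors increase strictly and each factor starts at a
datum no larger than the last one of the previous factor.

Fractional parts: `f` is an order isomorphism between two finite subsets of `[0,1)` that maps `0`
to `0`, so interpolating affinely between consecutive points extends it to an order-preserving
bijection of `[0,1)`.
-/

variable {A : Type*} {D : Type*} [LinearOrder D]

open Set

section Glue

variable {α β : Type*} [LinearOrder α] [LinearOrder β]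

theorem StrictMonoOn.Ico_ite {g₁ g₂ : α → β} {a m b : α} {n : β}
    (h₁ : StrictMonoOn g₁ (Ico a m)) (h₂ : StrictMonoOn g₂ (Ico m b))
    (h₁n : MapsTo g₁ (Ico a m) (Iio n)) (h₂n : MapsTo g₂ (Ico m b) (Ici n)) :
    StrictMonoOn (fun x => if x < m then g₁ x else g₂ x) (Ico a b) := by
  intro x hx y hy hxy
  by_cases hym : y < m
  · simp only [hym, hxy.trans hym, if_true]
    exact h₁ ⟨hx.1, hxy.trans hym⟩ ⟨hy.1, hym⟩ hxy
  by_cases hxm : x < m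
  · simp only [hxm, hym, if_true, if_false]
    exact (h₁n ⟨hx.1, hxm⟩).trans_le (h₂n ⟨not_lt.1 hym, hy.2⟩)
  · simp only [hxm, hym, if_false]
    exact h₂ ⟨not_lt.1 hxm, hx.2⟩ ⟨not_lt.1 hym, hy.2⟩ hxy

theorem bijOn_and_strictMonoOn_Ico_ite {g₁ g₂ : α → β} {a m b : α} {c n d : β}
    (ham : a ≤ m) (hmb : m ≤ b) (hcn : c ≤ n) (hnd : n ≤ d)
    (h₁ : BijOn g₁ (Ico a m) (Ico c n)) (h₂ : BijOn g₂ (Ico m b) (Ico n d))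
    (h₁' : StrictMonoOn g₁ (Ico a m)) (h₂' : StrictMonoOn g₂ (Ico m b)) :
    BijOn (fun x => if x < m then g₁ x else g₂ x) (Ico a b) (Ico c d) ∧
      StrictMonoOn (fun x => if x < m then g₁ x else g₂ x) (Ico a b) := by
  have hmono := h₁'.Ico_ite h₂' (fun x hx => (h₁.mapsTo hx).2) (fun x hx => (h₂.mapsTo hx).1)
  refine ⟨?_, hmono⟩
  rw [← Ico_union_Ico_eq_Ico ham hmb, ← Ico_union_Ico_eq_Ico hcn hnd]
  refine BijOn.union (h₁.congr fun x hx => ?_) (h₂.congr fun x hx => ?_) ?_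
  · simp [hx.2]
  · simp [not_lt.2 hx.1]
  · rw [Ico_union_Ico_eq_Ico ham hmb]
    exact hmono.injOn

end Glue

section Extension

variable {K : Type*} [Field K] [LinearOrder K] [IsStrictOrderedRing K]

theorem exists_affine_bijOn_Ico {a b c d : K} (hab : a < b) (hcd : c < d) :
    ∃ φ : K → K, BijOn φ (Ico a b) (Ico c d) ∧ StrictMono φ ∧ φ a = c := by
  set s := (d - c) / (b - a)
  have hs : 0 < s := div_pos (sub_pos.2 hcd) (sub_pos.2 hab)
  have hsb : s * b + (c - s * a) = d := by
    simp only [s]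
    field_simp [(sub_pos.2 hab).ne']
    ring
  have hmono : StrictMono (s * · + (c - s * a)) := fun x y hxy => by
    simpa using mul_lt_mul_of_pos_left hxy hs
  refine ⟨(s * · + (c - s * a)), ?_, hmono, by ring⟩
  have himage := image_affine_Ico hs (c - s * a) a b
  rw [hsb, show s * a + (c - s * a) = c by ring] at himage
  exact himage ▸ hmono.injective.injOn.bijOn_image

theorem exists_bijOn_Ico_extending {T : Finset K} {f : K → K} {a b c d : K}
    (hT : ↑T ⊆ Ico a b) (haT : a ∈ T) (hfa : f a = c) (hf : StrictMonoOn f T)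
    (hfT : MapsTo f T (Ico c d)) :
    ∃ g : K → K, BijOn g (Ico a b) (Ico c d) ∧ StrictMonoOn g (Ico a b) ∧ EqOn f g T := by
  classical
  induction T using Finset.induction_on_max generalizing b d with
  | empty => simp at haT
  | insert m T hlt ih =>
    rw [Finset.coe_insert] at hT hf hfT
    obtain ⟨hm, hTm⟩ := insert_subset_iff.1 hT
    have hfm := hfT (mem_insert m _)
    rcases T.eq_empty_or_nonempty with rfl | ⟨x, hx⟩
    · obtain rfl : a = m := by simpa using haT
      obtain ⟨φ, hφ, hφmono, hφa⟩ := exists_affine_bijOn_Ico hm.2 (hfa ▸ hfm.2)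
      exact ⟨φ, hφ, hφmono.strictMonoOn _, by simp [hfa, hφa]⟩
    have ham : a < m := (hTm hx).1.trans_lt (hlt x hx)
    have haT' : a ∈ T := by simpa [ham.ne] using haT
    have hfTm : MapsTo f T (Ico c (f m)) := fun y hy =>
      ⟨(hfT (mem_insert_of_mem m hy)).1,
        hf (mem_insert_of_mem m hy) (mem_insert m _) (hlt y hy)⟩
    obtain ⟨g₁, hg₁, hg₁mono, hg₁f⟩ :=
      ih (fun y hy => ⟨(hTm hy).1, hlt y hy⟩) haT' (hf.mono (subset_insert m _)) hfTm
    obtain ⟨g₂, hg₂, hg₂mono, hg₂m⟩ := exists_affine_bijOn_Ico hm.2 hfm.2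
    obtain ⟨hbij, hmono⟩ := bijOn_and_strictMonoOn_Ico_ite ham.le hm.2.le hfm.1 hfm.2.le
      hg₁ hg₂ hg₁mono (hg₂mono.strictMonoOn _)
    refine ⟨_, hbij, hmono, fun y hy => ?_⟩
    rcases Finset.mem_insert.1 hy with rfl | hy
    · simp [hg₂m]
    · simp [hlt y hy, hg₁f hy]

end Extension

theorem Int.floor_eq_floor_add_ite {K : Type*} [Field K] [LinearOrder K] [IsStrictOrderedRing K]
    [FloorRing K] {s t : K} (hst : s < t) (hts : t ≤ s + 1) :
    ⌊t⌋ = ⌊s⌋ + if Int.fract t ≤ Int.fract s then 1 else 0 := by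
  have hdiff : ((⌊t⌋ - ⌊s⌋ : ℤ) : K) = t - s + Int.fract s - Int.fract t := by
    rw [Int.fract, Int.fract]
    push_cast
    ring
  have hs := Int.fract_nonneg s
  have hs' := Int.fract_lt_one s
  have ht := Int.fract_nonneg t
  have ht' := Int.fract_lt_one t
  split_ifs with hfr
  · have h0 : ((0 : ℤ) : K) < ((⌊t⌋ - ⌊s⌋ : ℤ) : K) := by
      rw [hdiff]; push_cast; linarith
    have h2 : ((⌊t⌋ - ⌊s⌋ : ℤ) : K) < (2 : ℤ) := by rw [hdiff]; push_cast; linarith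
    have := Int.cast_lt.1 h0
    have := Int.cast_lt.1 h2
    omega
  · have h0 : ((-1 : ℤ) : K) < ((⌊t⌋ - ⌊s⌋ : ℤ) : K) := by
      rw [hdiff]; push_cast; linarith
    have h1 : ((⌊t⌋ - ⌊s⌋ : ℤ) : K) < (1 : ℤ) := by rw [hdiff]; push_cast; linarith
    have := Int.cast_lt.1 h0
    have := Int.cast_lt.1 h1
    omega

namespace IsTimedBraid

variable {marked : A → Prop} {u : List (A × ℝ)}

theorem time_lt (h : IsTimedBraid marked u) {i j : ℕ} (hij : i < j) (hj : j < u.length) :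
    u[i].2 < u[j].2 := by
  have hpw := List.pairwise_iff_getElem.1 (List.isChain_iff_pairwise.1 h.2.1)
  have hij' := hpw i j (by simp; omega) (by simpa using hj) hij
  rwa [List.getElem_map, List.getElem_map] at hij'

theorem time_succ_le_add_one (h : IsTimedBraid marked u) {i : ℕ} (hi : i + 1 < u.length) :
    u[i + 1].2 ≤ u[i].2 + 1 := by
  by_contra! hgap
  have hne : u ≠ [] := List.ne_nil_of_length_pos (by omega)
  have hlast : u[i + 1].2 ≤ (u.getLast hne).2 := by
    rw [List.getLast_eq_getElem]
    rcases (show i + 1 ≤ u.length - 1 by omega).lt_or_eq with hlt | heq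
    · exact (h.time_lt hlt (by omega)).le
    · simp only [heq, le_refl]
  have hbelow : u[i].2 < ⌊(u.getLast hne).2⌋ := by
    linarith [Int.sub_one_lt_floor (u.getLast hne).2]
  obtain ⟨j, hj, hij, hj1⟩ := h.2.2.2 _ (List.getLast?_eq_some_getLast hne) i (by omega)
    (by simpa using hbelow)
  simp only [List.get_eq_getElem] at hj1
  rcases (show i + 1 ≤ j by omega).lt_or_eq with hlt | rfl
  · linarith [h.time_lt hlt hj]
  · linarith

theorem floor_time_succ (h : IsTimedBraid marked u) {i : ℕ} (hi : i + 1 < u.length) :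
    ⌊u[i + 1].2⌋ = ⌊u[i].2⌋ + if Int.fract u[i + 1].2 ≤ Int.fract u[i].2 then 1 else 0 :=
  Int.floor_eq_floor_add_ite (h.time_lt (Nat.lt_succ_self i) hi) (h.time_succ_le_add_one hi)

end IsTimedBraid

theorem factorsEndedBefore_cons {α : Type*} (b : List α) (P : List (List α)) (i : ℕ) :
    factorsEndedBefore (b :: P) i =
      if b.length ≤ i then factorsEndedBefore P (i - b.length) + 1 else 0 := by
  unfold factorsEndedBefore
  simp only [List.length_cons, List.range_succ_eq_map, List.countP_cons, List.countP_map,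
    List.take_succ_cons, List.map_cons, List.sum_cons, List.take_zero, List.map_nil,
    List.sum_nil, add_zero, decide_eq_true_eq, Function.comp_def, Nat.succ_eq_add_one]
  split_ifs with hb
  · congr 1
    refine List.countP_congr fun j _ => ?_
    simp only [decide_eq_true_eq]
    omega
  · simp only [add_zero, List.countP_eq_zero, decide_eq_true_eq]
    intro j _
    omega

theorem factorsEndedBefore_zero_s14 {α : Type*} {P : List (List α)} (hP : ∀ b ∈ P, b ≠ []) :
    factorsEndedBefore P 0 = 0 := by
  cases P with
  | nil => rfl
  | cons b P =>
    rw [factorsEndedBefore_cons, if_neg]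
    simpa using hP b List.mem_cons_self

namespace IsOrderedPartition

theorem tail {b : List (A × D)} {P : List (List (A × D))} {w : List (A × D)}
    (hP : IsOrderedPartition (b :: P) w) : IsOrderedPartition P P.flatten :=
  ⟨rfl, fun c hc => hP.2.1 c (List.mem_cons_of_mem b hc),
    fun c hc => hP.2.2.1 c (List.mem_cons_of_mem b hc), hP.2.2.2.tail⟩

theorem factorsEndedBefore_succ {P : List (List (A × D))} {w : List (A × D)}
    (hP : IsOrderedPartition P w) {i : ℕ} (hi : i + 1 < w.length) :
    factorsEndedBefore P (i + 1) =
      factorsEndedBefore P i + if w[i + 1].2 ≤ w[i].2 then 1 else 0 := by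
  induction P generalizing w i with
  | nil => obtain rfl := hP.1; simp at hi
  | cons b Q ih =>
    have hQ := hP.tail
    obtain ⟨rfl, hne, hinc, hbd⟩ := hP
    simp only [List.flatten_cons, List.length_append] at hi ⊢
    rw [factorsEndedBefore_cons, factorsEndedBefore_cons]
    rcases lt_trichotomy (i + 1) b.length with hlt | heq | hgt
    · have hb := (hinc b List.mem_cons_self).getElem i (by simpa using hlt)
      simp only [List.getElem_map] at hb
      simp [List.getElem_append_left hlt, List.getElem_append_left (as := b) (i := i) (by omega),
        hb, show ¬ b.length ≤ i + 1 by omega, show ¬ b.length ≤ i by omega]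
    · obtain ⟨b', Q, rfl⟩ : ∃ b' Q', Q = b' :: Q' := by
        cases Q with
        | nil => simp at hi; omega
        | cons b' Q' => exact ⟨b', Q', rfl⟩
      have hb' : 0 < b'.length := List.length_pos_iff.2 (hne b' (by simp))
      have hle : b'[0].2 ≤ b[i].2 := by
        have hbb' := (List.isChain_cons_cons.1 hbd).1
        simp only [List.head?_eq_getElem?, List.getLast?_eq_getElem?, List.length_map] at hbb'
        simpa [hb', ← heq] using hbb'
      simp [List.getElem_append_left (as := b) (i := i) (by omega),
        List.getElem_append_left (as := b') (bs := Q.flatten) hb', heq, hle,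
        show ¬ b.length ≤ i by omega,
        factorsEndedBefore_zero_s14 (fun d hd => hne d (List.mem_cons_of_mem b hd))]
    · have := ih hQ (w := Q.flatten) (i := i - b.length) (by omega)
      simp [List.getElem_append_right (as := b) (i := i + 1) (by omega),
        List.getElem_append_right (as := b) (i := i) (by omega), show b.length ≤ i by omega,
        show b.length ≤ i + 1 by omega, show i + 1 - b.length = i - b.length + 1 by omega, this]
      abel

end IsOrderedPartition

theorem IsTimedBraid.factorsEndedBefore_eq_floor {marked : A → Prop} {u : List (A × ℝ)}
    (h : IsTimedBraid marked u) {P : List (List (A × ℝ))}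
    (hP : IsOrderedPartition P (u.map fun p => (p.1, Int.fract p.2))) {i : ℕ}
    (hi : i < u.length) : (factorsEndedBefore P i : ℤ) = ⌊u[i].2⌋ := by
  induction i with
  | zero =>
    rw [factorsEndedBefore_zero_s14 hP.2.1, h.1 u[0] (by simp [List.head?_eq_getElem?, hi])]
    simp
  | succ i ih =>
    rw [hP.factorsEndedBefore_succ (by simpa using hi), h.floor_time_succ hi, ← ih (by omega)]
    simp

/-- Round trip up to time isomorphism: converting a timed braid to the data braid of
fractional parts and back — via any order-preserving injection `f` of the occurring
data into `[0,1)` with `f 0 = 0`, integer parts counting preceding factor-ends — yields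
the image of the original word under a single time isomorphism `g`: each resulting
time stamp has the same integer part as the original one and fractional part `g` of
the original fractional part. -/
theorem roundTrip_upTo_timeIso {A : Type*} (marked : A → Prop) (u : List (A × ℝ))
    (h : IsTimedBraid marked u)
    (P : List (List (A × ℝ)))
    (hP : IsOrderedPartition P (u.map (fun p => (p.1, Int.fract p.2))))
    (f : ℝ → ℝ)
    (hrange : ∀ p ∈ u, f (Int.fract p.2) ∈ Set.Ico (0:ℝ) 1)
    (hmono : ∀ p ∈ u, ∀ q ∈ u,
      Int.fract p.2 < Int.fract q.2 → f (Int.fract p.2) < f (Int.fract q.2))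
    (hf0 : f 0 = 0) :
    ∃ g : ℝ → ℝ, Set.BijOn g (Set.Ico 0 1) (Set.Ico 0 1) ∧
      StrictMonoOn g (Set.Ico 0 1) ∧
      ∀ i (hi : i < u.length),
        (factorsEndedBefore P i : ℝ) + f (Int.fract (u.get ⟨i, hi⟩).2)
          = (⌊(u.get ⟨i, hi⟩).2⌋ : ℝ) + g (Int.fract (u.get ⟨i, hi⟩).2) := by
  rcases eq_or_ne u [] with rfl | hne
  · exact ⟨id, bijOn_id _, strictMonoOn_id, fun i hi => absurd hi (by simp)⟩
  set T := (u.map fun p => Int.fract p.2).toFinset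
  have hmemT : ∀ s, s ∈ T ↔ ∃ p ∈ u, Int.fract p.2 = s := by simp [T]
  have h0T : (0 : ℝ) ∈ T := (hmemT 0).2
    ⟨u.head hne, List.head_mem hne, by rw [h.1 _ (List.head?_eq_some_head hne)]; simp⟩
  obtain ⟨g, hbij, hgmono, hfg⟩ := exists_bijOn_Ico_extending (T := T) (b := 1) (d := 1)
    (fun s hs => by
      obtain ⟨p, -, rfl⟩ := (hmemT s).1 hs
      exact ⟨Int.fract_nonneg _, Int.fract_lt_one _⟩)
    h0T hf0
    (fun s hs t ht hst => by
      obtain ⟨p, hp, rfl⟩ := (hmemT s).1 hs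
      obtain ⟨q, hq, rfl⟩ := (hmemT t).1 ht
      exact hmono p hp q hq hst)
    (fun s hs => by
      obtain ⟨p, hp, rfl⟩ := (hmemT s).1 hs
      exact hrange p hp)
  refine ⟨g, hbij, hgmono, fun i hi => ?_⟩
  rw [← hfg ((hmemT _).2 ⟨_, List.get_mem u _, rfl⟩)]
  simp only [List.get_eq_getElem]
  exact_mod_cast congrArg (fun n : ℤ => (n : ℝ) + f (Int.fract u[i].2))
    (h.factorsEndedBefore_eq_floor hP hi)
end
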